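/- arXiv:2210.00091 — 7 statements merged into one kernel-verified Lean document; each statement's English description precedes it below -/
import Mathlib

section
/- Let λ be a standard half-Cauchy random variable (density 2/(π(1+x²)) on (0,∞)) and let Z be a standard normal random variable independent of λ. Then for every τ > 0 and every t > 0, P(τ·λ·|Z| > t) ≤ 2√(2/π) · τ/t. -/
open MeasureTheory ProbabilityTheory

/-- The standard half-Cauchy distribution `Ca⁺(0,1)`: density `2/(π(1+x²))` on `(0,∞)`. -/
noncomputable def halfCauchy : Measure ℝ :=
  volume.withDensity fun x => ENNReal.ofReal (if 0 < x then 2 / (Real.pi * (1 + x ^ 2)) else 0)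

/-!
Conditionally on `Z = z`, the event is `λ > t / (τ|z|)`. The half-Cauchy tail is
`P(λ > a) = (2/π) arctan (1/a) ≤ 2/(π a)`, so the conditional probability is at most
`(2τ/(πt)) |z|`. Integrating over `z` and using `E|Z| ≤ (1 + E Z²)/2 = 1` gives the bound
`2τ/(πt)`, which is below `2√(2/π) τ/t`.
-/

open Real Set

instance : SFinite halfCauchy := by unfold halfCauchy; infer_instance

lemma Real.arctan_le_self {x : ℝ} (hx : 0 ≤ x) : arctan x ≤ x := by
  simpa [tan_arctan] using le_tan (arctan_nonneg.mpr hx) (arctan_lt_pi_div_two x)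

lemma halfCauchy_Ioi {a : ℝ} (ha : 0 < a) :
    halfCauchy (Ioi a) = ENNReal.ofReal (2 / π * arctan a⁻¹) := by
  have hdensity : EqOn
      (fun x => ENNReal.ofReal (if 0 < x then 2 / (π * (1 + x ^ 2)) else 0))
      (fun x => ENNReal.ofReal (2 / π * (1 + x ^ 2)⁻¹)) (Ioi a) := by
    intro x hx
    simp only [if_pos (ha.trans hx), div_mul_eq_div_div, div_eq_mul_inv (2 / π)]
  rw [halfCauchy, withDensity_apply _ measurableSet_Ioi,
    setLIntegral_congr_fun measurableSet_Ioi hdensity,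
    ← ofReal_integral_eq_lintegral_ofReal
      (integrable_inv_one_add_sq.const_mul _).integrableOn
      (ae_of_all _ fun x => by positivity),
    integral_const_mul, integral_Ioi_inv_one_add_sq, arctan_inv_of_pos ha]

lemma halfCauchy_Ioi_le {a : ℝ} (ha : 0 < a) :
    halfCauchy (Ioi a) ≤ ENNReal.ofReal (2 / (π * a)) := by
  rw [halfCauchy_Ioi ha, div_mul_eq_div_div, div_eq_mul_inv (2 / π) a]
  gcongr
  exact arctan_le_self (inv_nonneg.mpr ha.le)

lemma halfCauchy_setOf_lt_mul_le {c t : ℝ} (hc : 0 ≤ c) (ht : 0 < t) :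
    halfCauchy {x | t < c * x} ≤ ENNReal.ofReal (2 * c / (π * t)) := by
  rcases hc.eq_or_lt with rfl | hc
  · simp [not_lt.mpr ht.le]
  have hset : {x | t < c * x} = Ioi (t / c) := by
    ext x
    simp [div_lt_iff₀' hc]
  calc halfCauchy {x | t < c * x} ≤ ENNReal.ofReal (2 / (π * (t / c))) :=
        hset ▸ halfCauchy_Ioi_le (div_pos ht hc)
    _ = ENNReal.ofReal (2 * c / (π * t)) := by
        congr 1
        field_simp

lemma lintegral_abs_gaussianReal_le_one :
    ∫⁻ z, ENNReal.ofReal |z| ∂(gaussianReal 0 1) ≤ 1 := by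
  have hsq : ∫ z, z ^ 2 ∂(gaussianReal 0 1) = 1 := by
    have := variance_eq_integral (μ := gaussianReal 0 1) measurable_id.aemeasurable
    simpa [integral_id_gaussianReal] using this.symm
  have hsq_int : Integrable (fun z : ℝ => z ^ 2) (gaussianReal 0 1) :=
    (memLp_id_gaussianReal 2).integrable_sq
  have hint : Integrable (fun z : ℝ => (1 + z ^ 2) / 2) (gaussianReal 0 1) :=
    ((integrable_const 1).add hsq_int).div_const 2
  calc ∫⁻ z, ENNReal.ofReal |z| ∂(gaussianReal 0 1)
      ≤ ∫⁻ z, ENNReal.ofReal ((1 + z ^ 2) / 2) ∂(gaussianReal 0 1) := by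
        refine lintegral_mono fun z => ENNReal.ofReal_le_ofReal ?_
        nlinarith [sq_nonneg (|z| - 1), sq_abs z]
    _ = 1 := by
        rw [← ofReal_integral_eq_lintegral_ofReal hint (ae_of_all _ fun z => by positivity),
          integral_div, integral_add (integrable_const 1) hsq_int,
          hsq]
        norm_num

/-- tail bound for the horseshoe-type scale mixture: if `λ ~ Ca⁺(0,1)` and
`Z ~ N(0,1)` are independent, then for all `τ, t > 0`, `P(τλ|Z| > t) ≤ 2√(2/π)·τ/t`. -/
theorem stmt_4 (τ t : ℝ) (hτ : 0 < τ) (ht : 0 < t) :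
    (halfCauchy.prod (gaussianReal 0 1)) {x : ℝ × ℝ | t < τ * x.1 * |x.2|} ≤
      ENNReal.ofReal (2 * Real.sqrt (2 / Real.pi) * τ / t) := by
  have hS : MeasurableSet {x : ℝ × ℝ | t < τ * x.1 * |x.2|} :=
    measurableSet_lt measurable_const ((measurable_fst.const_mul τ).mul measurable_snd.abs)
  have hslice (z : ℝ) : halfCauchy ((fun x => (x, z)) ⁻¹' {x : ℝ × ℝ | t < τ * x.1 * |x.2|})
      ≤ ENNReal.ofReal (2 * τ / (π * t)) * ENNReal.ofReal |z| := by
    have hpre : (fun x => (x, z)) ⁻¹' {x : ℝ × ℝ | t < τ * x.1 * |x.2|} =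
        {x | t < τ * |z| * x} := by
      ext x
      simp only [mem_preimage, mem_ofPred_eq, mul_right_comm τ x]
    rw [hpre, ← ENNReal.ofReal_mul (by positivity), div_mul_eq_mul_div, mul_assoc]
    exact halfCauchy_setOf_lt_mul_le (by positivity) ht
  have hconst : 2 * τ / (π * t) ≤ 2 * √(2 / π) * τ / t := by
    have : 1 / π ≤ √(2 / π) := le_sqrt_of_sq_le (by
      rw [div_pow, one_pow, sq, ← div_div]
      gcongr
      linarith [(div_le_one pi_pos).mpr (by linarith [pi_gt_three] : (1 : ℝ) ≤ π)])
    calc 2 * τ / (π * t) = 2 * (1 / π) * τ / t := by ring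
      _ ≤ 2 * √(2 / π) * τ / t := by gcongr
  calc (halfCauchy.prod (gaussianReal 0 1)) {x : ℝ × ℝ | t < τ * x.1 * |x.2|}
      ≤ ∫⁻ z, ENNReal.ofReal (2 * τ / (π * t)) * ENNReal.ofReal |z| ∂(gaussianReal 0 1) := by
        rw [Measure.prod_apply_symm hS]
        exact lintegral_mono hslice
    _ = ENNReal.ofReal (2 * τ / (π * t)) * ∫⁻ z, ENNReal.ofReal |z| ∂(gaussianReal 0 1) :=
        lintegral_const_mul _ measurable_abs.ennreal_ofReal
    _ ≤ ENNReal.ofReal (2 * τ / (π * t)) := by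
        exact mul_le_of_le_one_right zero_le lintegral_abs_gaussianReal_le_one
    _ ≤ ENNReal.ofReal (2 * √(2 / π) * τ / t) := ENNReal.ofReal_le_ofReal hconst
end

section
/- Let λ be a standard half-Cauchy random variable (density 2/(π(1+x²)) on (0,∞)) and let Z be a standard normal random variable independent of λ. There exists a universal constant c > 0 (one may take c = 2e^{−2}/(5π√(2π))) such that for all A ≥ 1, all τ with 0 < τ ≤ 1, all δ₀ with 0 < δ₀ ≤ A, and all β₀ ∈ ℝ with |β₀| ≤ A: P(|τ·λ·Z − β₀| ≤ δ₀) ≥ c · τ · δ₀ / A². -/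
/-! Condition on `λ`. On `λ ∈ [A/τ, 2A/τ]`, a set of half-Cauchy mass at least `2τ/(5πA)`,
the scale `τλ` lies in `[A, 2A]`, so `{z : |τλz - β₀| ≤ δ₀}` is an interval of length at least
`δ₀/A` inside `[-2, 2]`, where the standard normal density is at least `e⁻²/√(2π)`. The product
of the two bounds is the constant of the theorem. -/

open MeasureTheory ProbabilityTheory Set
open scoped ENNReal

lemma mul_ofReal_sub_le_withDensity_Icc {f : ℝ → ℝ≥0∞} {a b : ℝ} {c : ℝ≥0∞}
    (h : ∀ x ∈ Icc a b, c ≤ f x) :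
    c * ENNReal.ofReal (b - a) ≤ volume.withDensity f (Icc a b) := by
  rw [withDensity_apply _ measurableSet_Icc, ← Real.volume_Icc, ← setLIntegral_const]
  exact setLIntegral_mono' measurableSet_Icc h

lemma mul_le_prod_apply_of_le_preimage_prodMk {α β : Type*} [MeasurableSpace α]
    [MeasurableSpace β] {μ : Measure α} {ν : Measure β} [SFinite ν] {s : Set (α × β)}
    (hs : MeasurableSet s) {I : Set α} (hI : MeasurableSet I) {c : ℝ≥0∞}
    (h : ∀ x ∈ I, c ≤ ν (Prod.mk x ⁻¹' s)) :
    c * μ I ≤ μ.prod ν s := by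
  rw [Measure.prod_apply hs, ← setLIntegral_const]
  exact (setLIntegral_mono' hI h).trans (setLIntegral_le_lintegral _ _)

lemma halfCauchy_Icc_ge {s : ℝ} (hs : 1 ≤ s) :
    ENNReal.ofReal (2 / (5 * Real.pi * s)) ≤ halfCauchy (Icc s (2 * s)) := by
  have hs0 : 0 < s := one_pos.trans_le hs
  have hdensity : ∀ x ∈ Icc s (2 * s), ENNReal.ofReal (2 / (5 * Real.pi * s ^ 2)) ≤
      ENNReal.ofReal (if 0 < x then 2 / (Real.pi * (1 + x ^ 2)) else 0) := by
    rintro x ⟨hx1, hx2⟩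
    rw [if_pos (hs0.trans_le hx1)]
    refine ENNReal.ofReal_le_ofReal (div_le_div_of_nonneg_left zero_le_two (by positivity) ?_)
    have : 1 + x ^ 2 ≤ 5 * s ^ 2 := by nlinarith
    nlinarith [Real.pi_pos]
  calc ENNReal.ofReal (2 / (5 * Real.pi * s))
      = ENNReal.ofReal (2 / (5 * Real.pi * s ^ 2)) * ENNReal.ofReal (2 * s - s) := by
        rw [← ENNReal.ofReal_mul (by positivity)]
        congr 1
        field_simp
        ring
    _ ≤ halfCauchy (Icc s (2 * s)) := mul_ofReal_sub_le_withDensity_Icc hdensity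

lemma gaussianReal_Icc_ge {a b : ℝ} (ha : -2 ≤ a) (hb : b ≤ 2) :
    ENNReal.ofReal (Real.exp (-2) / √(2 * Real.pi) * (b - a)) ≤
      gaussianReal 0 1 (Icc a b) := by
  rw [gaussianReal_of_var_ne_zero 0 one_ne_zero, ENNReal.ofReal_mul (by positivity)]
  refine mul_ofReal_sub_le_withDensity_Icc fun x hx => ?_
  rw [gaussianPDF, gaussianPDFReal]
  refine ENNReal.ofReal_le_ofReal ?_
  have hx2 : x ^ 2 ≤ 4 := by nlinarith [hx.1, hx.2]
  simp only [NNReal.coe_one, mul_one, sub_zero, div_eq_inv_mul (Real.exp _)]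
  gcongr
  linarith

lemma gaussianReal_abs_mul_sub_le_ge {t β δ : ℝ} (ht : 0 < t) (h : |β| + δ ≤ 2 * t) :
    ENNReal.ofReal (Real.exp (-2) / √(2 * Real.pi) * (2 * δ / t)) ≤
      gaussianReal 0 1 {z | |t * z - β| ≤ δ} := by
  have hset : {z | |t * z - β| ≤ δ} = Icc ((β - δ) / t) ((β + δ) / t) := by
    ext z
    simp only [mem_ofPred_eq, mem_Icc, abs_le, div_le_iff₀ ht, le_div_iff₀ ht]
    constructor <;> rintro ⟨h1, h2⟩ <;> constructor <;> linarith
  have hlen : (β + δ) / t - (β - δ) / t = 2 * δ / t := by ring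
  rw [hset, ← hlen]
  refine gaussianReal_Icc_ge ?_ ?_
  · rw [le_div_iff₀ ht]
    linarith [neg_abs_le β]
  · rw [div_le_iff₀ ht]
    linarith [le_abs_self β]

/-- small-ball lower bound for the horseshoe-type scale mixture: if
`λ ~ Ca⁺(0,1)` and `Z ~ N(0,1)` are independent, then with the universal constant
`c = 2e^{−2}/(5π√(2π)) > 0`, for all `A ≥ 1`, `0 < τ ≤ 1`, `0 < δ₀ ≤ A`, `|β₀| ≤ A`:
`P(|τλZ − β₀| ≤ δ₀) ≥ c·τ·δ₀/A²`. -/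
theorem stmt_5 (A τ δ0 β0 : ℝ) (hA : 1 ≤ A) (hτ1 : 0 < τ) (hτ2 : τ ≤ 1)
    (hδ1 : 0 < δ0) (hδ2 : δ0 ≤ A) (hβ : |β0| ≤ A) :
    ENNReal.ofReal
        (2 * Real.exp (-2) / (5 * Real.pi * Real.sqrt (2 * Real.pi)) * τ * δ0 / A ^ 2) ≤
      (halfCauchy.prod (gaussianReal 0 1)) {x : ℝ × ℝ | |τ * x.1 * x.2 - β0| ≤ δ0} := by
  have hA0 : 0 < A := one_pos.trans_le hA
  have hs : 1 ≤ A / τ := (one_le_div hτ1).2 (hτ2.trans hA)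
  have hS : MeasurableSet {x : ℝ × ℝ | |τ * x.1 * x.2 - β0| ≤ δ0} :=
    measurableSet_le (by fun_prop) measurable_const
  have hslice : ∀ l ∈ Icc (A / τ) (2 * (A / τ)),
      ENNReal.ofReal (Real.exp (-2) / √(2 * Real.pi) * (δ0 / A)) ≤
        gaussianReal 0 1 (Prod.mk l ⁻¹' {x : ℝ × ℝ | |τ * x.1 * x.2 - β0| ≤ δ0}) := by
    rintro l ⟨hl1, hl2⟩
    have ht1 : A ≤ τ * l := by rwa [div_le_iff₀' hτ1] at hl1
    have ht2 : τ * l ≤ 2 * A := by rwa [← mul_div_assoc, le_div_iff₀' hτ1] at hl2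
    refine le_trans (ENNReal.ofReal_le_ofReal ?_)
      (gaussianReal_abs_mul_sub_le_ge (hA0.trans_le ht1) (by linarith))
    refine mul_le_mul_of_nonneg_left ?_ (by positivity)
    rw [div_le_div_iff₀ hA0 (hA0.trans_le ht1)]
    nlinarith
  calc ENNReal.ofReal
        (2 * Real.exp (-2) / (5 * Real.pi * Real.sqrt (2 * Real.pi)) * τ * δ0 / A ^ 2)
      = ENNReal.ofReal (Real.exp (-2) / √(2 * Real.pi) * (δ0 / A)) *
          ENNReal.ofReal (2 / (5 * Real.pi * (A / τ))) := by
        rw [← ENNReal.ofReal_mul (by positivity)]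
        congr 1
        field_simp
    _ ≤ ENNReal.ofReal (Real.exp (-2) / √(2 * Real.pi) * (δ0 / A)) *
          halfCauchy (Icc (A / τ) (2 * (A / τ))) := by
        gcongr
        exact halfCauchy_Icc_ge hs
    _ ≤ _ := mul_le_prod_apply_of_le_preimage_prodMk hS measurableSet_Icc hslice
end

section
/- Let n ≥ d ≥ 1 and p ≥ d be integers with n − d + 1 ≥ 1 and p − d + 1 ≥ 1, and let ε > 0. For w ∈ {0,1}^{n−d+1} define U^w ∈ ℝ^{n×d} whose first column is (εw, 0_{d−1}) (i.e., εw in the first n−d+1 entries, zeros below), whose bottom-right (d−1)×(d−1) block is the identity I_{d−1}, and which is zero elsewhere; define V⁰ ∈ ℝ^{p×d} whose first column has its first p−d+1 entries equal to 1 and the rest 0, whose bottom-right (d−1)×(d−1) block is I_{d−1}, and which is zero elsewhere. Then for all w₁, w₂ ∈ {0,1}^{n−d+1}: ‖U^{w₁}(V⁰)ᵀ − U^{w₂}(V⁰)ᵀ‖_F² = (p − d + 1) · ε² · d_H(w₁, w₂), where d_H denotes Hamming distance. -/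
open scoped Matrix
open Finset

/-- Frobenius norm of a real matrix. -/
noncomputable def frob {m l : Type*} [Fintype m] [Fintype l] (A : Matrix m l ℝ) : ℝ :=
  Real.sqrt (∑ i, ∑ j, (A i j) ^ 2)

/-- The hypothesis matrix `U^w ∈ ℝ^{n×d}`: first column is `(εw, 0_{d−1})`, the
bottom-right `(d−1)×(d−1)` block is the identity, and all other entries are zero. -/
noncomputable def Uw (n d : ℕ) (ε : ℝ) (w : Fin (n - d + 1) → ℝ) : Matrix (Fin n) (Fin d) ℝ :=
  Matrix.of fun i c =>
    if (c : ℕ) = 0 then (if h : (i : ℕ) < n - d + 1 then ε * w ⟨i, h⟩ else 0)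
    else (if (i : ℕ) = n - d + (c : ℕ) then 1 else 0)

/-- The matrix `V⁰ ∈ ℝ^{p×d}`: first column has its first `p−d+1` entries equal to 1 and
the rest 0, the bottom-right `(d−1)×(d−1)` block is the identity, zero elsewhere. -/
noncomputable def V0 (p d : ℕ) : Matrix (Fin p) (Fin d) ℝ :=
  Matrix.of fun i c =>
    if (c : ℕ) = 0 then (if (i : ℕ) < p - d + 1 then 1 else 0)
    else (if (i : ℕ) = p - d + (c : ℕ) then 1 else 0)

/-!
Since `U^{w₁}` and `U^{w₂}` differ only in their first column, the difference
`(U^{w₁} - U^{w₂})(V⁰)ᵀ` is the rank-one matrix `u vᵀ` with `u = (ε(w₁ - w₂), 0)` and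
`v` the first column of `V⁰`. The squared Frobenius norm of `u vᵀ`
is `‖u‖² ‖v‖²`; here `‖v‖² = p - d + 1` and, since `w₁, w₂` are binary,
`‖u‖² = ε² d_H(w₁, w₂)`.
-/

def padZero {M : Type*} [Zero M] {k : ℕ} (n : ℕ) (f : Fin k → M) : Fin n → M :=
  fun i => if h : (i : ℕ) < k then f ⟨i, h⟩ else 0

theorem comp_padZero {M N : Type*} [Zero M] [Zero N] {k : ℕ} (n : ℕ) (f : Fin k → M)
    {g : M → N} (hg : g 0 = 0) : g ∘ padZero n f = padZero n (g ∘ f) := by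
  ext i
  by_cases h : (i : ℕ) < k <;> simp [padZero, h, hg]

theorem sum_padZero {M : Type*} [AddCommMonoid M] {k n : ℕ} (hk : k ≤ n) (f : Fin k → M) :
    ∑ i, padZero n f i = ∑ i, f i := by
  obtain ⟨m, rfl⟩ := Nat.exists_eq_add_of_le hk
  simp [Fin.sum_univ_add, padZero]

theorem sum_sq_padZero {k n : ℕ} (hk : k ≤ n) (f : Fin k → ℝ) :
    ∑ i, padZero n f i ^ 2 = ∑ i, f i ^ 2 := by
  rw [← sum_padZero hk]
  exact Finset.sum_congr rfl fun i _ =>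
    congrFun (comp_padZero n f (g := (· ^ 2)) (zero_pow two_ne_zero)) i

theorem frob_sq {m l : Type*} [Fintype m] [Fintype l] (A : Matrix m l ℝ) :
    frob A ^ 2 = ∑ i, ∑ j, A i j ^ 2 :=
  Real.sq_sqrt (by positivity)

theorem frob_sq_vecMulVec {m l : Type*} [Fintype m] [Fintype l] (u : m → ℝ) (v : l → ℝ) :
    frob (Matrix.vecMulVec u v) ^ 2 = (∑ i, u i ^ 2) * ∑ j, v j ^ 2 := by
  simp only [frob_sq, Matrix.vecMulVec_apply, mul_pow, Finset.sum_mul_sum]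

theorem sq_sub_eq_ite_ne_of_binary {a b : ℝ} (ha : a = 0 ∨ a = 1) (hb : b = 0 ∨ b = 1) :
    (a - b) ^ 2 = if a ≠ b then 1 else 0 := by
  rcases ha with rfl | rfl <;> rcases hb with rfl | rfl <;> norm_num

theorem sum_sq_sub_eq_card_ne_of_binary {ι : Type*} [Fintype ι] {x y : ι → ℝ}
    (hx : ∀ i, x i = 0 ∨ x i = 1) (hy : ∀ i, y i = 0 ∨ y i = 1) :
    ∑ i, (x i - y i) ^ 2 = ((Finset.univ.filter fun i => x i ≠ y i).card : ℝ) := by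
  simp only [fun i => sq_sub_eq_ite_ne_of_binary (hx i) (hy i), Finset.sum_boole]

theorem Uw_sub_Uw {n d : ℕ} [NeZero d] (ε : ℝ) (w₁ w₂ : Fin (n - d + 1) → ℝ) :
    Uw n d ε w₁ - Uw n d ε w₂ =
      Matrix.vecMulVec (padZero n (ε • (w₁ - w₂))) (Pi.single 0 1) := by
  ext i c
  simp only [Matrix.sub_apply, Uw, Matrix.of_apply, Matrix.vecMulVec_apply, padZero,
    Pi.smul_apply, Pi.sub_apply, smul_eq_mul]
  by_cases hc : c = 0
  · subst hc
    simp only [Fin.val_zero, ↓reduceIte, Pi.single_eq_same, mul_one]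
    split_ifs <;> ring
  · have hc' : (c : ℕ) ≠ 0 := Fin.val_ne_iff.mpr hc
    simp [hc, hc']

theorem V0_col_zero {p d : ℕ} [NeZero d] :
    (V0 p d).col 0 = padZero p (fun _ : Fin (p - d + 1) => (1 : ℝ)) := by
  ext j
  simp [V0, padZero]

theorem stmt_12_general (n p d : ℕ) (hd : 1 ≤ d) (hdn : d ≤ n) (hdp : d ≤ p)
    (ε : ℝ)
    (w₁ w₂ : Fin (n - d + 1) → ℝ)
    (hw₁ : ∀ i, w₁ i = 0 ∨ w₁ i = 1) (hw₂ : ∀ i, w₂ i = 0 ∨ w₂ i = 1) :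
    (frob (Uw n d ε w₁ * (V0 p d)ᵀ - Uw n d ε w₂ * (V0 p d)ᵀ)) ^ 2 =
      ((p - d + 1 : ℕ) : ℝ) * ε ^ 2 *
        ((Finset.univ.filter fun i => w₁ i ≠ w₂ i).card : ℝ) := by
  have : NeZero d := ⟨by omega⟩
  have hrank_one : Uw n d ε w₁ * (V0 p d)ᵀ - Uw n d ε w₂ * (V0 p d)ᵀ =
      Matrix.vecMulVec (padZero n (ε • (w₁ - w₂)))
        (padZero p fun _ : Fin (p - d + 1) => 1) := by
    rw [← Matrix.sub_mul, Uw_sub_Uw, Matrix.vecMulVec_mul, Matrix.single_one_vecMul,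
      Matrix.row_transpose, V0_col_zero]
  have hu : ∑ i, padZero n (ε • (w₁ - w₂)) i ^ 2 =
      ε ^ 2 * ((Finset.univ.filter fun i => w₁ i ≠ w₂ i).card : ℝ) := by
    rw [sum_sq_padZero (by omega), ← sum_sq_sub_eq_card_ne_of_binary hw₁ hw₂, Finset.mul_sum]
    simp only [Pi.smul_apply, Pi.sub_apply, smul_eq_mul, mul_pow]
  have hv : ∑ j, padZero p (fun _ : Fin (p - d + 1) => (1 : ℝ)) j ^ 2 =
      ((p - d + 1 : ℕ) : ℝ) := by
    simp [sum_sq_padZero (by omega : p - d + 1 ≤ p)]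
  rw [hrank_one, frob_sq_vecMulVec, hu, hv]
  ring

/-- separation identity for the asymmetric hypothesis construction:
`‖U^{w₁}(V⁰)ᵀ − U^{w₂}(V⁰)ᵀ‖_F² = (p−d+1)·ε²·d_H(w₁,w₂)` for binary `w₁, w₂`. -/
theorem stmt_12 (n p d : ℕ) (hd : 1 ≤ d) (hdn : d ≤ n) (hdp : d ≤ p)
    (ε : ℝ) (hε : 0 < ε)
    (w₁ w₂ : Fin (n - d + 1) → ℝ)
    (hw₁ : ∀ i, w₁ i = 0 ∨ w₁ i = 1) (hw₂ : ∀ i, w₂ i = 0 ∨ w₂ i = 1) :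
    (frob (Uw n d ε w₁ * (V0 p d)ᵀ - Uw n d ε w₂ * (V0 p d)ᵀ)) ^ 2 =
      ((p - d + 1 : ℕ) : ℝ) * ε ^ 2 *
        ((Finset.univ.filter fun i => w₁ i ≠ w₂ i).card : ℝ) :=
  stmt_12_general n p d hd hdn hdp ε w₁ w₂ hw₁ hw₂
end

section
/- For all integers n ≥ 4 and n₀ with 1 ≤ n₀ ≤ n/4, there exist an integer M and vectors w^{(1)}, …, w^{(M)} ∈ {0,1}^n such that: (i) ‖w^{(i)}‖₀ = n₀ for all 1 ≤ i ≤ M; (ii) d_H(w^{(i)}, w^{(j)}) ≥ n₀/2 for all 1 ≤ i ≠ j ≤ M; and (iii) log M ≥ 0.233 · n₀ · log(n/n₀). -/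
/-!
A maximal family of words in `[m]^{n₀}` at pairwise Hamming distance `> K` covers the whole
space by its radius-`K` balls (the Gilbert–Varshamov argument), and a ball has at most
`2^{n₀} (m-1)^K` points, so the family has at least `m^{n₀} / (2^{n₀} (m-1)^K)` words. Take
`m = ⌊n/n₀⌋ ≥ 4` and `K = ⌊(n₀-1)/4⌋`, and encode a word as a binary vector with one `1` in each
of `n₀` disjoint blocks of length `m`: the vector has `n₀` ones and the encoding doubles Hamming
distances. The constant `0.233` comes from `0.233 log (m+1) ≤ log m - log 2 - log (m-1)/4`
for `m ≥ 4`.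
-/

open Finset Real

theorem exists_finset_pairwise_not_rel_forall_exists_rel {α : Type*} [Fintype α]
    (r : α → α → Prop) (hrefl : ∀ x, r x x) (hsymm : ∀ x y, r x y → r y x) :
    ∃ C : Finset α, (C : Set α).Pairwise (fun x y => ¬ r x y) ∧ ∀ x, ∃ y ∈ C, r x y := by
  classical
  obtain ⟨C, hC, hmax⟩ := exists_max_image
    (univ.powerset.filter fun C : Finset α => (C : Set α).Pairwise fun x y => ¬ r x y) card
    ⟨∅, by simp⟩
  have hCpair := (mem_filter.1 hC).2
  refine ⟨C, hCpair, fun x => ?_⟩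
  by_contra! hfar
  have hx : x ∉ C := fun hx => hfar x hx (hrefl x)
  have hins : ((insert x C : Finset α) : Set α).Pairwise fun x y => ¬ r x y := by
    rw [coe_insert]
    exact hCpair.insert_of_notMem hx fun y hy => ⟨hfar y hy, fun hyx => hfar y hy (hsymm y x hyx)⟩
  have := hmax _ (mem_filter.2 ⟨mem_powerset.2 (subset_univ _), hins⟩)
  rw [card_insert_of_notMem hx] at this
  omega

theorem Fintype.card_le_card_mul_of_forall_exists {α : Type*} [Fintype α] [DecidableEq α]
    (r : α → α → Prop) [DecidableRel r] (C : Finset α) (hcover : ∀ x, ∃ y ∈ C, r x y) (B : ℕ)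
    (hB : ∀ y, #{x | r x y} ≤ B) : Fintype.card α ≤ #C * B := by
  calc Fintype.card α = #(univ : Finset α) := rfl
    _ ≤ #(C.biUnion fun y => {x | r x y}) := card_le_card fun x _ => by
        obtain ⟨y, hy, hxy⟩ := hcover x
        exact mem_biUnion.2 ⟨y, hy, by simpa using hxy⟩
    _ ≤ #C * B := card_biUnion_le_card_mul _ _ _ fun y _ => hB y

section Hamming

variable {ι α : Type*} [Fintype ι] [Fintype α] [DecidableEq α]

theorem card_hammingDist_le_le [DecidableEq ι] [Nontrivial α] (g : ι → α) (K : ℕ) :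
    #{f | hammingDist f g ≤ K} ≤ 2 ^ Fintype.card ι * (Fintype.card α - 1) ^ K := by
  -- `f` lies in the box of its disagreement set `s`: `f i ≠ g i` on `s`, `f i = g i` off `s`
  let box (s : Finset ι) : Finset (ι → α) :=
    Fintype.piFinset fun i => if i ∈ s then univ.erase (g i) else {g i}
  have hbox (s : Finset ι) : #(box s) = (Fintype.card α - 1) ^ #s := by
    simp only [box, Fintype.card_piFinset, apply_ite card, card_erase_of_mem (mem_univ _),
      card_singleton, prod_ite_mem, univ_inter, prod_const, card_univ]
  have hq : 1 ≤ Fintype.card α - 1 := by have := Fintype.one_lt_card (α := α); omega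
  let small : Finset (Finset ι) := univ.powerset.filter (#· ≤ K)
  have hcover : ({f | hammingDist f g ≤ K} : Finset (ι → α)) ⊆ small.biUnion box := by
    intro f hf
    refine mem_biUnion.2 ⟨({i | f i ≠ g i} : Finset ι), by simpa [small, hammingDist] using hf, ?_⟩
    simp only [box, Fintype.mem_piFinset]
    intro i
    split_ifs <;> simp_all
  calc #{f | hammingDist f g ≤ K}
      ≤ #(small.biUnion box) := card_le_card hcover
    _ ≤ #small * (Fintype.card α - 1) ^ K :=
        card_biUnion_le_card_mul _ _ _ fun s hs => (hbox s).trans_le <|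
          Nat.pow_le_pow_right hq (mem_filter.1 hs).2
    _ ≤ 2 ^ Fintype.card ι * (Fintype.card α - 1) ^ K := by
        gcongr
        exact (card_filter_le _ _).trans (by simp)

theorem exists_code_pow_card_le_card_mul [DecidableEq ι] [Nontrivial α] (K : ℕ) :
    ∃ C : Finset (ι → α), (C : Set (ι → α)).Pairwise (fun f g => K < hammingDist f g) ∧
      Fintype.card α ^ Fintype.card ι ≤ #C * (2 ^ Fintype.card ι * (Fintype.card α - 1) ^ K) := by
  obtain ⟨C, hpair, hcover⟩ := exists_finset_pairwise_not_rel_forall_exists_rel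
    (fun f g : ι → α => hammingDist f g ≤ K) (fun f => by simp)
    (fun f g h => hammingDist_comm f g ▸ h)
  refine ⟨C, fun f hf g hg hfg => not_le.1 (hpair hf hg hfg), ?_⟩
  rw [← Fintype.card_fun]
  exact Fintype.card_le_card_mul_of_forall_exists _ C hcover _ (card_hammingDist_le_le · K)

def oneHot (f : ι → α) (p : ι × α) : Bool := f p.1 = p.2

theorem card_oneHot_eq_true [DecidableEq ι] (f : ι → α) :
    #{p | oneHot f p = true} = Fintype.card ι := by
  have : ({p | oneHot f p = true} : Finset (ι × α)) = univ.image fun i => (i, f i) := by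
    ext ⟨i, a⟩
    simp [oneHot, eq_comm]
  rw [this, card_image_of_injective _ fun i j h => (Prod.ext_iff.1 h).1, card_univ]

theorem hammingDist_oneHot (f g : ι → α) :
    hammingDist (oneHot f) (oneHot g) = 2 * hammingDist f g := by
  have hfiber (i : ι) : ∑ a, (if oneHot f (i, a) ≠ oneHot g (i, a) then 1 else 0) =
      if f i ≠ g i then 2 else 0 := by
    by_cases h : f i = g i
    · simp [oneHot, h]
    · have hsplit (a : α) : (if oneHot f (i, a) ≠ oneHot g (i, a) then 1 else 0) =
          (if f i = a then 1 else 0) + (if g i = a then 1 else 0) := by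
        by_cases f i = a <;> by_cases g i = a <;> simp_all [oneHot]
      simp [hsplit, sum_add_distrib, h]
  simp only [hammingDist, card_filter, Fintype.sum_prod_type, hfiber, mul_sum]
  exact sum_congr rfl fun i _ => by split_ifs <;> rfl

end Hamming

theorem Finset.card_filter_eq_card_filter_comp {γ β : Type*} [Fintype γ] [Fintype β] (e : γ ↪ β)
    (P : β → Prop) [DecidablePred P] (hP : ∀ k, P k → k ∈ Set.range e) :
    #{k | P k} = #{c | P (e c)} := by
  rw [← card_map e]
  congr 1
  ext k
  simp only [mem_filter, mem_univ, true_and, mem_map]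
  constructor
  · intro hk
    obtain ⟨c, rfl⟩ := hP k hk
    exact ⟨c, hk, rfl⟩
  · rintro ⟨c, hc, rfl⟩
    exact hc

section Extend

variable {γ β τ : Type*} [Fintype γ] [Fintype β]

theorem card_filter_extend (e : γ ↪ β) (v : γ → τ) (d : β → τ) (P : τ → Prop) [DecidablePred P]
    (hd : ∀ k, ¬ P (d k)) : #{k | P (Function.extend e v d k)} = #{c | P (v c)} := by
  rw [card_filter_eq_card_filter_comp e]
  · simp only [e.injective.extend_apply]
  · intro k hk
    by_contra hk'
    exact hd k (Function.extend_apply' v d k hk' ▸ hk)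

theorem hammingDist_extend [DecidableEq τ] (e : γ ↪ β) (v v' : γ → τ) (d : β → τ) :
    hammingDist (Function.extend e v d) (Function.extend e v' d) = hammingDist v v' := by
  unfold hammingDist
  rw [card_filter_eq_card_filter_comp e]
  · simp only [e.injective.extend_apply]
  · intro k hk
    by_contra hk'
    simp [Function.extend_apply' _ d k hk'] at hk

end Extend

theorem mul_log_add_one_le_of_four_le {x : ℝ} (hx : 4 ≤ x) :
    0.233 * log (x + 1) ≤ log x - log 2 - log (x - 1) / 4 := by
  have hx0 : 0 < x := by linarith
  have hsucc : log (x + 1) - log x ≤ 1 / x := by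
    rw [← log_div (by linarith) hx0.ne']
    calc log ((x + 1) / x) ≤ (x + 1) / x - 1 := log_le_sub_one_of_pos (by positivity)
      _ = 1 / x := by field_simp; ring
  have hpred : log (x - 1) - log x ≤ -(1 / x) := by
    rw [← log_div (by linarith) hx0.ne']
    calc log ((x - 1) / x) ≤ (x - 1) / x - 1 := log_le_sub_one_of_pos (div_pos (by linarith) hx0)
      _ = -(1 / x) := by field_simp; ring
  have hfour : 2 * log 2 ≤ log x := by
    rw [← log_rpow two_pos]
    exact log_le_log (by positivity) (by norm_num; linarith)
  have hinv : 0 < 1 / x := by positivity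
  have hlog2 : 0 < log 2 := log_pos one_lt_two
  linarith

theorem mul_log_add_one_le_log_of_pow_le {M m n₀ K : ℕ} (hm : 4 ≤ m) (hK : 4 * K ≤ n₀)
    (h : m ^ n₀ ≤ M * (2 ^ n₀ * (m - 1) ^ K)) : 0.233 * n₀ * log (m + 1) ≤ log M := by
  have hmR : (4 : ℝ) ≤ m := by exact_mod_cast hm
  have hm1 : (0 : ℝ) < m - 1 := by linarith
  have hR : (m : ℝ) ^ n₀ ≤ M * (2 ^ n₀ * ((m : ℝ) - 1) ^ K) := by
    have := (Nat.cast_le (α := ℝ)).2 h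
    push_cast [Nat.cast_sub (by omega : 1 ≤ m)] at this
    exact this
  have hM : (0 : ℝ) < M := by
    by_contra! hM0
    have : (M : ℝ) = 0 := le_antisymm hM0 M.cast_nonneg
    rw [this, zero_mul] at hR
    exact (pow_pos (by linarith) n₀).not_ge hR
  have hlogs : n₀ * log m ≤ log M + n₀ * log 2 + K * log (m - 1) := by
    have := log_le_log (by positivity) hR
    rwa [log_mul hM.ne' (by positivity), log_mul (by positivity) (by positivity), log_pow,
      log_pow, log_pow, ← add_assoc] at this
  have hK' : K * log ((m : ℝ) - 1) ≤ n₀ / 4 * log (m - 1) := by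
    gcongr
    · exact log_nonneg (by linarith)
    · rw [le_div_iff₀ (by norm_num)]; exact_mod_cast (by omega : K * 4 ≤ n₀)
  have hkey := mul_le_mul_of_nonneg_left (mul_log_add_one_le_of_four_le hmR) n₀.cast_nonneg
  linarith

theorem stmt_14_general (n n₀ : ℕ) (h1 : 1 ≤ n₀) (h2 : 4 * n₀ ≤ n) :
    ∃ (M : ℕ) (w : Fin M → Fin n → Bool),
      (∀ i, (Finset.univ.filter fun k => w i k = true).card = n₀) ∧
      (∀ i j, i ≠ j →
        (n₀ : ℝ) / 2 ≤ ((Finset.univ.filter fun k => w i k ≠ w j k).card : ℝ)) ∧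
      0.233 * (n₀ : ℝ) * Real.log ((n : ℝ) / (n₀ : ℝ)) ≤ Real.log (M : ℝ) := by
  set m := n / n₀
  have hm : 4 ≤ m := (Nat.le_div_iff_mul_le h1).2 h2
  have : Nontrivial (Fin m) := Fin.nontrivial_iff_two_le.2 (by omega)
  obtain ⟨C, hC, hcard⟩ :=
    exists_code_pow_card_le_card_mul (ι := Fin n₀) (α := Fin m) ((n₀ - 1) / 4)
  obtain ⟨e⟩ : Nonempty (Fin n₀ × Fin m ↪ Fin n) :=
    Function.Embedding.nonempty_of_card_le (by simpa [mul_comm] using Nat.div_mul_le_self n n₀)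
  let c (i : Fin #C) : Fin n₀ → Fin m := C.equivFin.symm i
  refine ⟨#C, fun i => Function.extend e (oneHot (c i)) fun _ => false, fun i => ?_,
    fun i j hij => ?_, ?_⟩
  · exact (card_filter_extend e _ _ (· = true) (by simp)).trans
      ((card_oneHot_eq_true (c i)).trans (Fintype.card_fin n₀))
  · change _ ≤ ((hammingDist _ _ : ℕ) : ℝ)
    rw [hammingDist_extend, hammingDist_oneHot]
    have : (n₀ - 1) / 4 < hammingDist (c i) (c j) :=
      hC (C.equivFin.symm i).2 (C.equivFin.symm j).2
        fun h => hij (C.equivFin.symm.injective (Subtype.ext h))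
    rw [div_le_iff₀ two_pos]
    exact_mod_cast (by omega : n₀ ≤ 2 * hammingDist (c i) (c j) * 2)
  · simp only [Fintype.card_fin] at hcard
    have hn : (n : ℝ) / n₀ < m + 1 := by
      simpa [m, Nat.floor_div_eq_div] using Nat.lt_floor_add_one ((n : ℝ) / n₀)
    have hpos : (0 : ℝ) < n / n₀ := div_pos (by norm_cast; omega) (by norm_cast)
    calc 0.233 * (n₀ : ℝ) * Real.log (n / n₀) ≤ 0.233 * n₀ * Real.log (m + 1) := by gcongr
      _ ≤ Real.log #C := mul_log_add_one_le_log_of_pow_le hm (by omega) hcard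

/-- sparse Varshamov–Gilbert bound.  For `n ≥ 4` and `1 ≤ n₀ ≤ n/4` there
exist `M` binary vectors in `{0,1}^n`, each of sparsity exactly `n₀`, with pairwise Hamming
distance at least `n₀/2`, and `log M ≥ 0.233·n₀·log(n/n₀)`. -/
theorem stmt_14 (n n₀ : ℕ) (hn : 4 ≤ n) (h1 : 1 ≤ n₀) (h2 : 4 * n₀ ≤ n) :
    ∃ (M : ℕ) (w : Fin M → Fin n → Bool),
      (∀ i, (Finset.univ.filter fun k => w i k = true).card = n₀) ∧
      (∀ i j, i ≠ j →
        (n₀ : ℝ) / 2 ≤ ((Finset.univ.filter fun k => w i k ≠ w j k).card : ℝ)) ∧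
      0.233 * (n₀ : ℝ) * Real.log ((n : ℝ) / (n₀ : ℝ)) ≤ Real.log (M : ℝ) :=
  stmt_14_general n n₀ h1 h2
end

section
/- Let Û₁, Û₂, U₁, U₂ ∈ ℝ^{n×d}, let O₁, O₂ be d×d orthogonal matrices, and let Ô be any d×d orthogonal matrix achieving the minimum of O ↦ ‖Û₂O − Û₁‖_F over the orthogonal group O(d). Then ‖Û₂Ô − U₂O₁‖_F ≤ 2‖Û₁ − U₁O₁‖_F + ‖Û₂ − U₂O₂‖_F + 2‖U₂ − U₁‖_F. -/
open scoped Matrix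

/-!
Right multiplication by an orthogonal matrix is an isometry for the Frobenius norm.
Comparing `Ô` with the competitor `O₂ᵀO₁` bounds the Procrustes residual `‖Û₂Ô − Û₁‖_F` by
`‖Û₂ − U₂O₂‖_F + ‖U₂ − U₁‖_F + ‖Û₁ − U₁O₁‖_F`, and the triangle inequality through `Û₁` and `U₁O₁`
adds `‖Û₁ − U₁O₁‖_F + ‖U₂ − U₁‖_F` once more.
-/

namespace Matrix

variable {m l : Type*} [Fintype m] [Fintype l]

theorem transpose_mul_self_eq_one_mul {R : Type*} [CommSemiring R] [DecidableEq l]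
    {P Q : Matrix l l R} (hP : Pᵀ * P = 1) (hQ : Qᵀ * Q = 1) : (P * Q)ᵀ * (P * Q) = 1 := by
  rw [transpose_mul, Matrix.mul_assoc, ← Matrix.mul_assoc Pᵀ, hP, Matrix.one_mul, hQ]

theorem transpose_transpose_mul_transpose_eq_one {R : Type*} [CommSemiring R] [DecidableEq l]
    {Q : Matrix l l R} (hQ : Qᵀ * Q = 1) : Qᵀᵀ * Qᵀ = 1 := by
  rw [transpose_transpose, mul_eq_one_comm.mp hQ]

theorem sum_sum_sq_eq_trace_mul_transpose (A : Matrix m l ℝ) :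
    ∑ i, ∑ j, A i j ^ 2 = (A * Aᵀ).trace := by
  simp [trace, mul_apply, sq]

end Matrix

theorem norm_sub_le_norm_sub_add_norm_sub_add_norm_sub {E : Type*} [SeminormedAddGroup E]
    (a b c d : E) : ‖a - d‖ ≤ ‖a - b‖ + ‖b - c‖ + ‖c - d‖ :=
  (norm_sub_le_norm_sub_add_norm_sub a c d).trans
    (add_le_add_left (norm_sub_le_norm_sub_add_norm_sub a b c) _)

section Frobenius

attribute [local instance] Matrix.frobeniusNormedAddCommGroup

variable {m l : Type*} [Fintype m] [Fintype l]

theorem frob_eq_norm (A : Matrix m l ℝ) : frob A = ‖A‖ := by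
  simp [frob, Matrix.frobenius_norm_def, Real.sqrt_eq_rpow]

theorem frobenius_norm_mul_of_transpose_mul_self_eq_one [DecidableEq l] (A : Matrix m l ℝ)
    {Q : Matrix l l ℝ} (hQ : Qᵀ * Q = 1) : ‖A * Q‖ = ‖A‖ := by
  have hQQ : Q * Qᵀ = 1 := mul_eq_one_comm.mp hQ
  rw [← frob_eq_norm, ← frob_eq_norm, frob, frob, Matrix.sum_sum_sq_eq_trace_mul_transpose,
    Matrix.sum_sum_sq_eq_trace_mul_transpose, Matrix.transpose_mul, Matrix.mul_assoc,
    ← Matrix.mul_assoc Q, hQQ, Matrix.one_mul]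

variable [DecidableEq l] {Uh₁ Uh₂ U₁ U₂ : Matrix m l ℝ} {O₁ O₂ Oh : Matrix l l ℝ}

theorem frobenius_norm_procrustes_residual_le (hO₁ : O₁ᵀ * O₁ = 1) (hO₂ : O₂ᵀ * O₂ = 1)
    (hmin : ∀ O : Matrix l l ℝ, Oᵀ * O = 1 → ‖Uh₂ * Oh - Uh₁‖ ≤ ‖Uh₂ * O - Uh₁‖) :
    ‖Uh₂ * Oh - Uh₁‖ ≤ ‖Uh₂ - U₂ * O₂‖ + ‖U₂ - U₁‖ + ‖Uh₁ - U₁ * O₁‖ := by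
  have hQ : (O₂ᵀ * O₁)ᵀ * (O₂ᵀ * O₁) = 1 :=
    Matrix.transpose_mul_self_eq_one_mul
      (Matrix.transpose_transpose_mul_transpose_eq_one hO₂) hO₁
  have hshift : (Uh₂ - U₂ * O₂) * (O₂ᵀ * O₁) = Uh₂ * (O₂ᵀ * O₁) - U₂ * O₁ := by
    rw [Matrix.sub_mul, Matrix.mul_assoc, ← Matrix.mul_assoc O₂, mul_eq_one_comm.mp hO₂,
      Matrix.one_mul]
  calc ‖Uh₂ * Oh - Uh₁‖
      ≤ ‖Uh₂ * (O₂ᵀ * O₁) - Uh₁‖ := hmin _ hQ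
    _ ≤ ‖Uh₂ * (O₂ᵀ * O₁) - U₂ * O₁‖ + ‖U₂ * O₁ - U₁ * O₁‖ + ‖U₁ * O₁ - Uh₁‖ :=
        norm_sub_le_norm_sub_add_norm_sub_add_norm_sub _ _ _ _
    _ = ‖Uh₂ - U₂ * O₂‖ + ‖U₂ - U₁‖ + ‖Uh₁ - U₁ * O₁‖ := by
        rw [← hshift, ← Matrix.sub_mul, norm_sub_rev (U₁ * O₁),
          frobenius_norm_mul_of_transpose_mul_self_eq_one _ hQ,
          frobenius_norm_mul_of_transpose_mul_self_eq_one _ hO₁]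

theorem frobenius_norm_procrustes_chain_le (hO₁ : O₁ᵀ * O₁ = 1) (hO₂ : O₂ᵀ * O₂ = 1)
    (hmin : ∀ O : Matrix l l ℝ, Oᵀ * O = 1 → ‖Uh₂ * Oh - Uh₁‖ ≤ ‖Uh₂ * O - Uh₁‖) :
    ‖Uh₂ * Oh - U₂ * O₁‖ ≤ 2 * ‖Uh₁ - U₁ * O₁‖ + ‖Uh₂ - U₂ * O₂‖ + 2 * ‖U₂ - U₁‖ := by
  have hresidual := frobenius_norm_procrustes_residual_le (U₂ := U₂) (U₁ := U₁) hO₁ hO₂ hmin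
  have htail : ‖U₁ * O₁ - U₂ * O₁‖ = ‖U₂ - U₁‖ := by
    rw [← Matrix.sub_mul, frobenius_norm_mul_of_transpose_mul_self_eq_one _ hO₁, norm_sub_rev]
  have htriangle := norm_sub_le_norm_sub_add_norm_sub_add_norm_sub
    (Uh₂ * Oh) Uh₁ (U₁ * O₁) (U₂ * O₁)
  linarith

end Frobenius

theorem stmt_16_general {n d : ℕ} (Uh₁ Uh₂ U₁ U₂ : Matrix (Fin n) (Fin d) ℝ)
    (O₁ O₂ Oh : Matrix (Fin d) (Fin d) ℝ)
    (hO₁ : O₁ᵀ * O₁ = 1) (hO₂ : O₂ᵀ * O₂ = 1)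
    (hmin : ∀ O : Matrix (Fin d) (Fin d) ℝ, Oᵀ * O = 1 →
      frob (Uh₂ * Oh - Uh₁) ≤ frob (Uh₂ * O - Uh₁)) :
    frob (Uh₂ * Oh - U₂ * O₁) ≤
      2 * frob (Uh₁ - U₁ * O₁) + frob (Uh₂ - U₂ * O₂) + 2 * frob (U₂ - U₁) := by
  simp only [frob_eq_norm] at hmin ⊢
  exact frobenius_norm_procrustes_chain_le hO₁ hO₂ hmin

/-- chain inequality for sequential Procrustes rotations.  If `Ô` minimizes
`O ↦ ‖Û₂O − Û₁‖_F` over the orthogonal group, then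
`‖Û₂Ô − U₂O₁‖_F ≤ 2‖Û₁ − U₁O₁‖_F + ‖Û₂ − U₂O₂‖_F + 2‖U₂ − U₁‖_F`. -/
theorem stmt_16 {n d : ℕ} (Uh₁ Uh₂ U₁ U₂ : Matrix (Fin n) (Fin d) ℝ)
    (O₁ O₂ Oh : Matrix (Fin d) (Fin d) ℝ)
    (hO₁ : O₁ᵀ * O₁ = 1) (hO₂ : O₂ᵀ * O₂ = 1) (hOh : Ohᵀ * Oh = 1)
    (hmin : ∀ O : Matrix (Fin d) (Fin d) ℝ, Oᵀ * O = 1 →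
      frob (Uh₂ * Oh - Uh₁) ≤ frob (Uh₂ * O - Uh₁)) :
    frob (Uh₂ * Oh - U₂ * O₁) ≤
      2 * frob (Uh₁ - U₁ * O₁) + frob (Uh₂ - U₂ * O₂) + 2 * frob (U₂ - U₁) :=
  stmt_16_general Uh₁ Uh₂ U₁ U₂ O₁ O₂ Oh hO₁ hO₂ hmin
end

section
/- Let X, Y ∈ ℝ^{n×d} with n ≥ d ≥ 1, suppose X has full column rank d, and let σ_min(X) > 0 denote its smallest singular value. Set ε = ‖Y Yᵀ − X Xᵀ‖_F^{1/2}. If ε/σ_min(X) ≤ 1/√2, then min over d×d orthogonal matrices O of ‖Y − XO‖_F ≤ (1 + √2) · ε² / σ_min(X). -/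
/-!
Let `σ = σ_min(X)`, let `G = (XᵀX)⁻¹Xᵀ` be the pseudoinverse of `X`, so that `‖Gv‖ ≤ ‖v‖/σ`, and
split `Y = XB + A` with `B = GY` and `A = (1 - XG)Y`. For `E = YYᵀ - XXᵀ` one has `GEGᵀ = BBᵀ - 1`
and `GE(1 - XG) = BAᵀ`. The first identity gives `‖BBᵀ - 1‖_F ≤ ‖E‖_F/σ² ≤ 1/2`, so that `B` and
`Bᵀ` stretch every vector by at least `1/√2`; the second then gives `‖A‖_F ≤ √2 ‖E‖_F/σ`.
Write `B = SO` (polar decomposition, `S = (BBᵀ)^{1/2}`). Since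
`X(S - 1)(S + 1)Xᵀ = X(BBᵀ - 1)Xᵀ = (XG)E(XG)ᵀ` and `S + 1 ≥ 1`, we get
`‖X(B - O)‖_F = ‖X(S - 1)‖_F ≤ ‖E‖_F/σ`, and `Y - XO = X(B - O) + A`.
-/

open scoped Matrix

/-- Euclidean norm of a vector in `ℝ^k`. -/
noncomputable def enorm2 {k : ℕ} (v : Fin k → ℝ) : ℝ :=
  Real.sqrt (∑ i, v i ^ 2)

/-- Smallest singular value of an `n×d` real matrix: the infimum of `‖Xv‖` over unit
vectors `v ∈ ℝ^d`. -/
noncomputable def sigmaMin {n d : ℕ} (X : Matrix (Fin n) (Fin d) ℝ) : ℝ :=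
  sInf {c | ∃ v : Fin d → ℝ, enorm2 v = 1 ∧ c = enorm2 (X.mulVec v)}

open Matrix

section EuclideanNorm

variable {k m : ℕ}

lemma enorm2_eq_norm (v : Fin k → ℝ) : enorm2 v = ‖WithLp.toLp 2 v‖ := by
  simp [enorm2, EuclideanSpace.norm_eq]

lemma enorm2_nonneg (v : Fin k → ℝ) : 0 ≤ enorm2 v := Real.sqrt_nonneg _

lemma enorm2_zero : enorm2 (0 : Fin k → ℝ) = 0 := by simp [enorm2]

lemma enorm2_pos {v : Fin k → ℝ} (hv : v ≠ 0) : 0 < enorm2 v := by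
  simpa [enorm2_eq_norm] using hv

lemma enorm2_smul (t : ℝ) (v : Fin k → ℝ) : enorm2 (t • v) = |t| * enorm2 v := by
  simp [enorm2_eq_norm, norm_smul]

lemma enorm2_sq (v : Fin k → ℝ) : enorm2 v ^ 2 = v ⬝ᵥ v := by
  rw [enorm2, Real.sq_sqrt (by positivity)]
  simp [dotProduct, sq]

lemma abs_dotProduct_le_enorm2_mul (v w : Fin k → ℝ) : |v ⬝ᵥ w| ≤ enorm2 v * enorm2 w := by
  simpa [enorm2_eq_norm, EuclideanSpace.inner_toLp_toLp, dotProduct_comm] using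
    abs_real_inner_le_norm (WithLp.toLp 2 v) (WithLp.toLp 2 w)

lemma enorm2_mulVec_sq (M : Matrix (Fin m) (Fin k) ℝ) (v : Fin k → ℝ) :
    enorm2 (M *ᵥ v) ^ 2 = v ⬝ᵥ ((Mᵀ * M) *ᵥ v) := by
  rw [enorm2_sq, ← mulVec_mulVec, dotProduct_mulVec v Mᵀ, vecMul_transpose]

end EuclideanNorm

section Frobenius

lemma frob_nonneg {m l : Type*} [Fintype m] [Fintype l] (M : Matrix m l ℝ) : 0 ≤ frob M :=
  Real.sqrt_nonneg _

lemma frob_transpose {m l : Type*} [Fintype m] [Fintype l] (M : Matrix m l ℝ) :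
    frob Mᵀ = frob M := by
  rw [frob, frob, Finset.sum_comm]
  rfl

lemma frob_add_le {m l : Type*} [Fintype m] [Fintype l] (M N : Matrix m l ℝ) :
    frob (M + N) ≤ frob M + frob N := by
  let e (A : Matrix m l ℝ) : EuclideanSpace ℝ (m × l) := WithLp.toLp 2 fun p => A p.1 p.2
  have h (A : Matrix m l ℝ) : frob A = ‖e A‖ := by
    rw [EuclideanSpace.norm_eq, frob, ← Finset.sum_product']
    simp [e, sq_abs]
  rw [h, h, h]
  exact norm_add_le (e M) (e N)

variable {a b c : ℕ}

lemma frob_sq_eq_sum_col (C : Matrix (Fin b) (Fin c) ℝ) :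
    frob C ^ 2 = ∑ j, enorm2 (fun i => C i j) ^ 2 := by
  rw [frob, Real.sq_sqrt (by positivity), Finset.sum_comm]
  exact Finset.sum_congr rfl fun j _ => (Real.sq_sqrt (by positivity)).symm

lemma col_mul (A : Matrix (Fin a) (Fin b) ℝ) (C : Matrix (Fin b) (Fin c) ℝ) (j : Fin c) :
    (fun i => (A * C) i j) = A *ᵥ fun i => C i j := by
  ext i
  simp [mul_apply, mulVec, dotProduct]

lemma enorm2_mulVec_le (M : Matrix (Fin a) (Fin b) ℝ) (v : Fin b → ℝ) :
    enorm2 (M *ᵥ v) ≤ frob M * enorm2 v := by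
  refine (pow_le_pow_iff_left₀ (enorm2_nonneg _) (mul_nonneg (frob_nonneg _) (enorm2_nonneg _))
    two_ne_zero).mp ?_
  rw [mul_pow, frob, enorm2, enorm2, Real.sq_sqrt (by positivity), Real.sq_sqrt (by positivity),
    Real.sq_sqrt (by positivity), Finset.sum_mul]
  refine Finset.sum_le_sum fun i _ => ?_
  simpa [mulVec, dotProduct] using Finset.sum_mul_sq_le_sq_mul_sq Finset.univ (M i) v

lemma frob_mul_le {r : ℝ} (hr : 0 ≤ r) {A : Matrix (Fin a) (Fin b) ℝ}
    (hA : ∀ v, enorm2 (A *ᵥ v) ≤ r * enorm2 v) (C : Matrix (Fin b) (Fin c) ℝ) :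
    frob (A * C) ≤ r * frob C := by
  refine (pow_le_pow_iff_left₀ (frob_nonneg _) (mul_nonneg hr (frob_nonneg _)) two_ne_zero).mp ?_
  rw [mul_pow, frob_sq_eq_sum_col, frob_sq_eq_sum_col, Finset.mul_sum]
  gcongr with j
  rw [col_mul, ← mul_pow]
  gcongr
  · exact enorm2_nonneg _
  · exact hA _

lemma le_frob_mul {r : ℝ} (hr : 0 ≤ r) {A : Matrix (Fin a) (Fin b) ℝ}
    (hA : ∀ v, r * enorm2 v ≤ enorm2 (A *ᵥ v)) (C : Matrix (Fin b) (Fin c) ℝ) :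
    r * frob C ≤ frob (A * C) := by
  refine (pow_le_pow_iff_left₀ (mul_nonneg hr (frob_nonneg _)) (frob_nonneg _) two_ne_zero).mp ?_
  rw [mul_pow, frob_sq_eq_sum_col, frob_sq_eq_sum_col, Finset.mul_sum]
  gcongr with j
  rw [col_mul, ← mul_pow]
  gcongr
  · exact mul_nonneg hr (enorm2_nonneg _)
  · exact hA _

lemma frob_mul_le_right {r : ℝ} (hr : 0 ≤ r) {A : Matrix (Fin b) (Fin c) ℝ}
    (hA : ∀ v, enorm2 (Aᵀ *ᵥ v) ≤ r * enorm2 v) (M : Matrix (Fin a) (Fin b) ℝ) :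
    frob (M * A) ≤ r * frob M := by
  rw [← frob_transpose, transpose_mul, ← frob_transpose M]
  exact frob_mul_le hr hA _

lemma le_frob_mul_right {r : ℝ} (hr : 0 ≤ r) {A : Matrix (Fin b) (Fin c) ℝ}
    (hA : ∀ v, r * enorm2 v ≤ enorm2 (Aᵀ *ᵥ v)) (M : Matrix (Fin a) (Fin b) ℝ) :
    r * frob M ≤ frob (M * A) := by
  rw [← frob_transpose (M * A), transpose_mul, ← frob_transpose M]
  exact le_frob_mul hr hA _

end Frobenius

section LowerBounds

variable {k m : ℕ}

lemma isUnit_det_of_lower_bound {M : Matrix (Fin k) (Fin k) ℝ} {r : ℝ} (hr : 0 < r)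
    (hM : ∀ v, r * enorm2 v ≤ enorm2 (M *ᵥ v)) : IsUnit M.det := by
  rw [isUnit_iff_ne_zero, Ne, ← exists_mulVec_eq_zero_iff]
  rintro ⟨v, hv, hMv⟩
  have := hM v
  rw [hMv, enorm2_zero] at this
  nlinarith [enorm2_pos hv]

lemma lower_bound_of_lower_bound_transpose {B : Matrix (Fin k) (Fin k) ℝ} {r : ℝ} (hr : 0 < r)
    (hB : ∀ v, r * enorm2 v ≤ enorm2 (Bᵀ *ᵥ v)) (v : Fin k → ℝ) :
    r * enorm2 v ≤ enorm2 (B *ᵥ v) := by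
  obtain ⟨w, rfl⟩ : ∃ w, Bᵀ *ᵥ w = v :=
    ⟨(Bᵀ)⁻¹ *ᵥ v, by rw [mulVec_mulVec, mul_nonsing_inv _ (isUnit_det_of_lower_bound hr hB),
      one_mulVec]⟩
  have h : enorm2 (Bᵀ *ᵥ w) ^ 2 ≤ enorm2 w * enorm2 (B *ᵥ (Bᵀ *ᵥ w)) := by
    rw [enorm2_mulVec_sq, transpose_transpose, ← mulVec_mulVec]
    exact (le_abs_self _).trans (abs_dotProduct_le_enorm2_mul _ _)
  rcases (enorm2_nonneg (Bᵀ *ᵥ w)).eq_or_lt with h0 | h0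
  · rw [← h0, mul_zero]
    exact enorm2_nonneg _
  · refine le_of_mul_le_mul_left ?_ h0
    nlinarith [hB w, enorm2_nonneg (B *ᵥ (Bᵀ *ᵥ w))]

lemma lower_bound_transpose_of_frob_mul_transpose_sub_one {B : Matrix (Fin k) (Fin m) ℝ} {r : ℝ}
    (hr : 0 ≤ r) (hB : r ^ 2 + frob (B * Bᵀ - 1) ≤ 1) (v : Fin k → ℝ) :
    r * enorm2 v ≤ enorm2 (Bᵀ *ᵥ v) := by
  have hsq : enorm2 (Bᵀ *ᵥ v) ^ 2 = enorm2 v ^ 2 + v ⬝ᵥ ((B * Bᵀ - 1) *ᵥ v) := by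
    rw [enorm2_mulVec_sq, transpose_transpose, sub_mulVec, one_mulVec, dotProduct_sub, enorm2_sq]
    ring
  have herr : |v ⬝ᵥ ((B * Bᵀ - 1) *ᵥ v)| ≤ frob (B * Bᵀ - 1) * enorm2 v ^ 2 :=
    calc _ ≤ enorm2 v * enorm2 ((B * Bᵀ - 1) *ᵥ v) := abs_dotProduct_le_enorm2_mul _ _
      _ ≤ enorm2 v * (frob (B * Bᵀ - 1) * enorm2 v) := by
        gcongr
        · exact enorm2_nonneg _
        · exact enorm2_mulVec_le _ _
      _ = _ := by ring
  refine (pow_le_pow_iff_left₀ (mul_nonneg hr (enorm2_nonneg _)) (enorm2_nonneg _)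
    two_ne_zero).mp ?_
  rw [mul_pow, hsq]
  nlinarith [neg_abs_le (v ⬝ᵥ ((B * Bᵀ - 1) *ᵥ v)), sq_nonneg (enorm2 v)]

lemma le_enorm2_add_one_mulVec {S : Matrix (Fin k) (Fin k) ℝ} (hS : S.PosSemidef)
    (v : Fin k → ℝ) : enorm2 v ≤ enorm2 ((S + 1) *ᵥ v) := by
  refine (pow_le_pow_iff_left₀ (enorm2_nonneg _) (enorm2_nonneg _) two_ne_zero).mp ?_
  have hSv : 0 ≤ v ⬝ᵥ (S *ᵥ v) := by simpa using hS.dotProduct_mulVec_nonneg v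
  rw [enorm2_sq, enorm2_sq, add_mulVec, one_mulVec, add_dotProduct, dotProduct_add,
    dotProduct_add, dotProduct_comm (S *ᵥ v) v]
  have hSSv : 0 ≤ (S *ᵥ v) ⬝ᵥ (S *ᵥ v) := by simpa using dotProduct_star_self_nonneg (S *ᵥ v)
  linarith

end LowerBounds

section Pinv

variable {m n : Type*} [Fintype m] [Fintype n] [DecidableEq n] {X : Matrix m n ℝ}

/-- The Moore–Penrose pseudoinverse when `X` has full column rank; junk otherwise, so the lemmas
below assume `IsUnit (Xᵀ * X).det`. -/
noncomputable def pinv (X : Matrix m n ℝ) : Matrix n m ℝ := (Xᵀ * X)⁻¹ * Xᵀ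

lemma pinv_mul_self (hX : IsUnit (Xᵀ * X).det) : pinv X * X = 1 := by
  rw [pinv, Matrix.mul_assoc, nonsing_inv_mul _ hX]

lemma transpose_mul_self_mul_pinv (hX : IsUnit (Xᵀ * X).det) : Xᵀ * (X * pinv X) = Xᵀ := by
  rw [pinv, ← Matrix.mul_assoc, ← Matrix.mul_assoc, mul_nonsing_inv _ hX, Matrix.one_mul]

lemma isSymm_self_mul_pinv : (X * pinv X).IsSymm := by
  change _ = _
  rw [pinv, transpose_mul, transpose_mul, transpose_nonsing_inv, transpose_mul,
    transpose_transpose, Matrix.mul_assoc]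

lemma isIdempotentElem_self_mul_pinv (hX : IsUnit (Xᵀ * X).det) :
    IsIdempotentElem (X * pinv X) := by
  rw [IsIdempotentElem, Matrix.mul_assoc, ← Matrix.mul_assoc (pinv X), pinv_mul_self hX,
    Matrix.one_mul]

variable (Y : Matrix m n ℝ)

lemma pinv_mul_gram_sub_mul_pinv_transpose (hX : IsUnit (Xᵀ * X).det) :
    pinv X * (Y * Yᵀ - X * Xᵀ) * (pinv X)ᵀ = pinv X * Y * (pinv X * Y)ᵀ - 1 := by
  have hx : pinv X * (X * Xᵀ) * (pinv X)ᵀ = 1 := by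
    rw [← Matrix.mul_assoc, pinv_mul_self hX, Matrix.one_mul, ← transpose_mul, pinv_mul_self hX,
      transpose_one]
  rw [Matrix.mul_sub, Matrix.sub_mul, hx, transpose_mul]
  simp only [Matrix.mul_assoc]

lemma pinv_mul_gram_sub_mul_one_sub [DecidableEq m] (hX : IsUnit (Xᵀ * X).det) :
    pinv X * (Y * Yᵀ - X * Xᵀ) * (1 - X * pinv X) = pinv X * Y * (Y - X * (pinv X * Y))ᵀ := by
  have hx : X * Xᵀ * (1 - X * pinv X) = 0 := by
    rw [Matrix.mul_assoc, Matrix.mul_sub, Matrix.mul_one, transpose_mul_self_mul_pinv hX, sub_self,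
      Matrix.mul_zero]
  have hres : Y - X * (pinv X * Y) = (1 - X * pinv X) * Y := by
    rw [Matrix.sub_mul, Matrix.one_mul, Matrix.mul_assoc]
  rw [hres, transpose_mul, transpose_sub, transpose_one, isSymm_self_mul_pinv.eq,
    Matrix.mul_sub (pinv X) (Y * Yᵀ), Matrix.sub_mul _ _ (1 - X * pinv X),
    Matrix.mul_assoc (pinv X) (X * Xᵀ), hx, Matrix.mul_zero, sub_zero]
  simp only [Matrix.mul_assoc]

end Pinv

section OrthProj

variable {k m : ℕ}

def IsOrthProj (P : Matrix (Fin k) (Fin k) ℝ) : Prop := P.IsSymm ∧ IsIdempotentElem P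

lemma isOrthProj_self_mul_pinv {X : Matrix (Fin m) (Fin k) ℝ} (hX : IsUnit (Xᵀ * X).det) :
    IsOrthProj (X * pinv X) :=
  ⟨isSymm_self_mul_pinv, isIdempotentElem_self_mul_pinv hX⟩

namespace IsOrthProj

variable {P : Matrix (Fin k) (Fin k) ℝ}

lemma one_sub (hP : IsOrthProj P) : IsOrthProj (1 - P) := by
  refine ⟨?_, hP.2.one_sub⟩
  rw [IsSymm, transpose_sub, transpose_one, hP.1.eq]

lemma enorm2_mulVec_le (hP : IsOrthProj P) (v : Fin k → ℝ) : enorm2 (P *ᵥ v) ≤ enorm2 v := by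
  have h : enorm2 (P *ᵥ v) ^ 2 ≤ enorm2 v * enorm2 (P *ᵥ v) := by
    rw [enorm2_mulVec_sq, hP.1.eq, hP.2.eq]
    exact (le_abs_self _).trans (abs_dotProduct_le_enorm2_mul _ _)
  nlinarith [enorm2_nonneg (P *ᵥ v), enorm2_nonneg v]

lemma frob_mul_le (hP : IsOrthProj P) (M : Matrix (Fin k) (Fin m) ℝ) : frob (P * M) ≤ frob M := by
  simpa using _root_.frob_mul_le zero_le_one (fun v => by simpa using hP.enorm2_mulVec_le v) M

lemma frob_mul_le_right (hP : IsOrthProj P) (M : Matrix (Fin m) (Fin k) ℝ) :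
    frob (M * P) ≤ frob M := by
  simpa using _root_.frob_mul_le_right zero_le_one
    (fun v => by simpa [hP.1.eq] using hP.enorm2_mulVec_le v) M

end IsOrthProj

end OrthProj

section Polar

open scoped MatrixOrder

variable {n : Type*} [Fintype n] [DecidableEq n]

lemma exists_posSemidef_mul_orthogonal {B : Matrix n n ℝ} (hB : IsUnit B.det) :
    ∃ S O : Matrix n n ℝ, S.PosSemidef ∧ S * S = B * Bᵀ ∧ Oᵀ * O = 1 ∧ S * O = B := by
  have hBB : 0 ≤ B * Bᵀ := by simpa using (posSemidef_self_mul_conjTranspose B).nonneg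
  set S := CFC.sqrt (B * Bᵀ)
  have hSS : S * S = B * Bᵀ := CFC.sqrt_mul_sqrt_self _ hBB
  have hS : S.PosSemidef := (CFC.sqrt_nonneg _).posSemidef
  have hSdet : IsUnit S.det := by
    have : IsUnit (S * S).det := by rw [hSS, det_mul, det_transpose]; exact hB.mul hB
    rw [det_mul] at this
    exact isUnit_of_mul_isUnit_left this
  have hST : Sᵀ = S := by simpa using hS.isHermitian.eq
  refine ⟨S, S⁻¹ * B, hS, hSS, ?_, ?_⟩
  · rw [mul_eq_one_comm, transpose_mul, transpose_nonsing_inv, hST, Matrix.mul_assoc,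
      ← Matrix.mul_assoc B, ← hSS, Matrix.mul_assoc S, mul_nonsing_inv _ hSdet, Matrix.mul_one,
      nonsing_inv_mul _ hSdet]
  · rw [← Matrix.mul_assoc, mul_nonsing_inv _ hSdet, Matrix.one_mul]

end Polar

lemma frob_mul_of_orthogonal {a b : ℕ} {O : Matrix (Fin b) (Fin b) ℝ} (hO : Oᵀ * O = 1)
    (M : Matrix (Fin a) (Fin b) ℝ) : frob (M * O) = frob M := by
  have h (v : Fin b → ℝ) : enorm2 (Oᵀ *ᵥ v) = enorm2 v := by
    rw [← pow_left_inj₀ (enorm2_nonneg _) (enorm2_nonneg _) two_ne_zero, enorm2_mulVec_sq,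
      transpose_transpose, mul_eq_one_comm.mp hO, one_mulVec, enorm2_sq]
  apply le_antisymm
  · simpa using frob_mul_le_right zero_le_one (fun v => (h v).trans_le (one_mul _).ge) M
  · simpa using le_frob_mul_right zero_le_one (fun v => (one_mul _).trans_le (h v).ge) M

section Procrustes

variable {n d : ℕ} {X : Matrix (Fin n) (Fin d) ℝ}

lemma sigmaMin_mul_enorm2_le (X : Matrix (Fin n) (Fin d) ℝ) (v : Fin d → ℝ) :
    sigmaMin X * enorm2 v ≤ enorm2 (X *ᵥ v) := by
  rcases (enorm2_nonneg v).eq_or_lt with hv | hv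
  · rw [← hv, mul_zero]
    exact enorm2_nonneg _
  have hunit : enorm2 ((enorm2 v)⁻¹ • v) = 1 := by
    rw [enorm2_smul, abs_of_pos (inv_pos.2 hv), inv_mul_cancel₀ hv.ne']
  have hle : sigmaMin X ≤ enorm2 (X *ᵥ ((enorm2 v)⁻¹ • v)) :=
    csInf_le ⟨0, fun _ ⟨_, _, hc⟩ => hc ▸ enorm2_nonneg _⟩ ⟨_, hunit, rfl⟩
  rwa [mulVec_smul, enorm2_smul, abs_of_pos (inv_pos.2 hv), le_inv_mul_iff₀ hv, mul_comm] at hle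

lemma isUnit_det_transpose_mul_self (hσ : 0 < sigmaMin X) : IsUnit (Xᵀ * X).det := by
  rw [isUnit_iff_ne_zero, Ne, ← exists_mulVec_eq_zero_iff]
  rintro ⟨v, hv, hXXv⟩
  have hXv : enorm2 (X *ᵥ v) = 0 := by
    rw [← sq_eq_zero_iff, enorm2_mulVec_sq, hXXv, dotProduct_zero]
  nlinarith [sigmaMin_mul_enorm2_le X v, enorm2_pos hv]

lemma enorm2_pinv_mulVec_le (hσ : 0 < sigmaMin X) (v : Fin n → ℝ) :
    enorm2 (pinv X *ᵥ v) ≤ (sigmaMin X)⁻¹ * enorm2 v := by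
  rw [le_inv_mul_iff₀ hσ]
  calc sigmaMin X * enorm2 (pinv X *ᵥ v) ≤ enorm2 ((X * pinv X) *ᵥ v) := by
        rw [← mulVec_mulVec]; exact sigmaMin_mul_enorm2_le X _
    _ ≤ enorm2 v :=
        (isOrthProj_self_mul_pinv (isUnit_det_transpose_mul_self hσ)).enorm2_mulVec_le v

variable (Y : Matrix (Fin n) (Fin d) ℝ)

lemma frob_pinv_mul_transpose_sub_one_le (hσ : 0 < sigmaMin X) :
    frob (pinv X * Y * (pinv X * Y)ᵀ - 1) ≤ frob (Y * Yᵀ - X * Xᵀ) / sigmaMin X ^ 2 := by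
  have hσ' : 0 ≤ (sigmaMin X)⁻¹ := inv_nonneg.2 hσ.le
  rw [← pinv_mul_gram_sub_mul_pinv_transpose Y (isUnit_det_transpose_mul_self hσ)]
  calc _ ≤ (sigmaMin X)⁻¹ * frob (pinv X * (Y * Yᵀ - X * Xᵀ)) :=
        frob_mul_le_right hσ' (fun v => by simpa using enorm2_pinv_mulVec_le hσ v) _
    _ ≤ (sigmaMin X)⁻¹ * ((sigmaMin X)⁻¹ * frob (Y * Yᵀ - X * Xᵀ)) := by
        gcongr
        exact frob_mul_le hσ' (enorm2_pinv_mulVec_le hσ) _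
    _ = _ := by field_simp

lemma frob_sub_mul_pinv_mul_le (hσ : 0 < sigmaMin X) {r : ℝ} (hr : 0 ≤ r)
    (hB : ∀ v, r * enorm2 v ≤ enorm2 ((pinv X * Y) *ᵥ v)) :
    r * frob (Y - X * (pinv X * Y)) ≤ frob (Y * Yᵀ - X * Xᵀ) / sigmaMin X := by
  have hX := isUnit_det_transpose_mul_self hσ
  rw [← frob_transpose]
  calc _ ≤ frob (pinv X * Y * (Y - X * (pinv X * Y))ᵀ) := le_frob_mul hr hB _
    _ = frob (pinv X * (Y * Yᵀ - X * Xᵀ) * (1 - X * pinv X)) := by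
        rw [pinv_mul_gram_sub_mul_one_sub Y hX]
    _ ≤ frob (pinv X * (Y * Yᵀ - X * Xᵀ)) :=
        (isOrthProj_self_mul_pinv hX).one_sub.frob_mul_le_right _
    _ ≤ (sigmaMin X)⁻¹ * frob (Y * Yᵀ - X * Xᵀ) :=
        frob_mul_le (inv_nonneg.2 hσ.le) (enorm2_pinv_mulVec_le hσ) _
    _ = _ := inv_mul_eq_div _ _

lemma frob_mul_sub_one_le (hσ : 0 < sigmaMin X) {S : Matrix (Fin d) (Fin d) ℝ}
    (hS : S.PosSemidef) (hSS : S * S = pinv X * Y * (pinv X * Y)ᵀ) :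
    frob (X * (S - 1)) ≤ frob (Y * Yᵀ - X * Xᵀ) / sigmaMin X := by
  have hX := isUnit_det_transpose_mul_self hσ
  have hP := isOrthProj_self_mul_pinv hX
  have hfactor : X * (S - 1) * (S + 1) * Xᵀ
      = X * pinv X * (Y * Yᵀ - X * Xᵀ) * (X * pinv X)ᵀ := by
    have h : (S - 1) * (S + 1) = S * S - 1 := by noncomm_ring
    rw [Matrix.mul_assoc X, h, hSS, ← pinv_mul_gram_sub_mul_pinv_transpose Y hX, transpose_mul]
    simp only [Matrix.mul_assoc]
  have hST : (S + 1)ᵀ = S + 1 := by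
    rw [transpose_add, transpose_one, show Sᵀ = S by simpa using hS.isHermitian.eq]
  rw [le_div_iff₀' hσ]
  calc sigmaMin X * frob (X * (S - 1)) ≤ sigmaMin X * frob (X * (S - 1) * (S + 1)) := by
        gcongr
        simpa using le_frob_mul_right zero_le_one
          (fun v => by simpa [hST] using le_enorm2_add_one_mulVec hS v) (X * (S - 1))
    _ ≤ frob (X * (S - 1) * (S + 1) * Xᵀ) :=
        le_frob_mul_right hσ.le (fun v => by simpa using sigmaMin_mul_enorm2_le X v) _
    _ = frob (X * pinv X * (Y * Yᵀ - X * Xᵀ) * (X * pinv X)ᵀ) := by rw [hfactor]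
    _ ≤ frob (X * pinv X * (Y * Yᵀ - X * Xᵀ)) := by
        rw [hP.1.eq]; exact hP.frob_mul_le_right _
    _ ≤ frob (Y * Yᵀ - X * Xᵀ) := hP.frob_mul_le _

end Procrustes

theorem stmt_17_general {n d : ℕ}
    (X Y : Matrix (Fin n) (Fin d) ℝ) (hpos : 0 < sigmaMin X)
    (hε : Real.sqrt (frob (Y * Yᵀ - X * Xᵀ)) / sigmaMin X ≤ 1 / Real.sqrt 2) :
    ∃ O : Matrix (Fin d) (Fin d) ℝ, Oᵀ * O = 1 ∧
      frob (Y - X * O) ≤ (1 + Real.sqrt 2) * frob (Y * Yᵀ - X * Xᵀ) / sigmaMin X := by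
  have hf : frob (Y * Yᵀ - X * Xᵀ) / sigmaMin X ^ 2 ≤ 1 / 2 := by
    have h := pow_le_pow_left₀ (by positivity) hε 2
    rwa [div_pow, div_pow, Real.sq_sqrt (frob_nonneg _), Real.sq_sqrt zero_le_two, one_pow] at h
  have hr : 0 < (Real.sqrt 2)⁻¹ := by positivity
  have hBt : ∀ v, (Real.sqrt 2)⁻¹ * enorm2 v ≤ enorm2 ((pinv X * Y)ᵀ *ᵥ v) := by
    refine lower_bound_transpose_of_frob_mul_transpose_sub_one hr.le ?_
    rw [inv_pow, Real.sq_sqrt zero_le_two]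
    linarith [frob_pinv_mul_transpose_sub_one_le Y hpos]
  have hB := lower_bound_of_lower_bound_transpose hr hBt
  obtain ⟨S, O, hS, hSS, hO, hSO⟩ := exists_posSemidef_mul_orthogonal
    (B := pinv X * Y) (by rw [← det_transpose]; exact isUnit_det_of_lower_bound hr hBt)
  refine ⟨O, hO, ?_⟩
  have hsplit : Y - X * O = X * (S - 1) * O + (Y - X * (pinv X * Y)) := by
    rw [← hSO, Matrix.mul_assoc, Matrix.sub_mul, Matrix.one_mul, Matrix.mul_sub]
    abel
  calc frob (Y - X * O)
      ≤ frob (X * (S - 1)) + frob (Y - X * (pinv X * Y)) := by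
        rw [hsplit, ← frob_mul_of_orthogonal hO (X * (S - 1))]
        exact frob_add_le _ _
    _ ≤ frob (Y * Yᵀ - X * Xᵀ) / sigmaMin X
          + Real.sqrt 2 * (frob (Y * Yᵀ - X * Xᵀ) / sigmaMin X) :=
        add_le_add (frob_mul_sub_one_le Y hpos hS hSS)
          ((inv_mul_le_iff₀ (by positivity)).mp (frob_sub_mul_pinv_mul_le Y hpos hr.le hB))
    _ = (1 + Real.sqrt 2) * frob (Y * Yᵀ - X * Xᵀ) / sigmaMin X := by ring

/-- perturbation bound for the orthogonal Procrustes problem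
(Arias-Castro et al.): if `X` has full column rank and `ε = ‖YYᵀ − XXᵀ‖_F^{1/2}` satisfies
`ε/σ_min(X) ≤ 1/√2`, then `min_{O ∈ O(d)} ‖Y − XO‖_F ≤ (1+√2)ε²/σ_min(X)`. -/
theorem stmt_17 {n d : ℕ} (hd : 1 ≤ d) (hnd : d ≤ n)
    (X Y : Matrix (Fin n) (Fin d) ℝ) (hrank : X.rank = d) (hpos : 0 < sigmaMin X)
    (hε : Real.sqrt (frob (Y * Yᵀ - X * Xᵀ)) / sigmaMin X ≤ 1 / Real.sqrt 2) :
    ∃ O : Matrix (Fin d) (Fin d) ℝ, Oᵀ * O = 1 ∧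
      frob (Y - X * O) ≤ (1 + Real.sqrt 2) * frob (Y * Yᵀ - X * Xᵀ) / sigmaMin X :=
  stmt_17_general X Y hpos hε
end

section
/- Let Û, U ∈ ℝ^{n×d} with U = ΘX, where Θ ∈ {0,1}^{n×K} is a membership matrix (exactly one entry equal to 1 in each row) and X ∈ ℝ^{K×d}. Let (Θ̂, X̂) be a global minimizer of ‖Θ′X′ − Û‖_F² over all membership matrices Θ′ ∈ {0,1}^{n×K} and all X′ ∈ ℝ^{K×d}, and set Ū = Θ̂X̂. For each k ∈ {1,…,K} let δ_k > 0 satisfy δ_k ≤ ‖X_l − X_k‖₂ for every l ≠ k (where X_k denotes the k-th row of X), let G_k = {i : Θ_{ik} = 1}, and let S_k = {i ∈ G_k : ‖Ū_i − U_i‖₂ ≥ δ_k/2} (where Ū_i, U_i denote the i-th rows). Then Σ_{k=1}^K |S_k| · δ_k² ≤ 16 · ‖Û − U‖_F². -/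
open Finset
open scoped Classical

/-- K-means misclustering error bound (Lei–Rinaldo).  Memberships are
encoded by functions `Fin n → Fin K` (equivalently, membership matrices with exactly one
`1` per row); `(memh, Xh)` is a global minimizer of the K-means objective for the rows of
`Û`, `Ū_i = Xh (memh i)`, and the truth satisfies `U_i = X (mem i)`.  If `δ_k > 0` is a
lower bound on the separation `‖X_l − X_k‖₂` for `l ≠ k`, and
`S_k = {i ∈ G_k : ‖Ū_i − U_i‖₂ ≥ δ_k/2}`, then `Σ_k |S_k| δ_k² ≤ 16‖Û − U‖_F²`. -/
theorem stmt_18 {n d K : ℕ} (Uh U : Matrix (Fin n) (Fin d) ℝ)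
    (mem : Fin n → Fin K) (X : Fin K → Fin d → ℝ)
    (hU : ∀ i, U i = X (mem i))
    (memh : Fin n → Fin K) (Xh : Fin K → Fin d → ℝ)
    (hmin : ∀ (m' : Fin n → Fin K) (X' : Fin K → Fin d → ℝ),
      (∑ i, ∑ j, (Xh (memh i) j - Uh i j) ^ 2) ≤ ∑ i, ∑ j, (X' (m' i) j - Uh i j) ^ 2)
    (δ : Fin K → ℝ) (hδpos : ∀ k, 0 < δ k)
    (hδ : ∀ k l, l ≠ k → δ k ≤ enorm2 (fun j => X l j - X k j)) :
    (∑ k, ((Finset.univ.filter fun i =>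
        mem i = k ∧ δ k / 2 ≤ enorm2 (fun j => Xh (memh i) j - U i j)).card : ℝ) * δ k ^ 2) ≤
      16 * ∑ i, ∑ j, (Uh i j - U i j) ^ 2 := by
  classical
  set f : Fin n → ℝ := fun i => ∑ j, (Xh (memh i) j - U i j) ^ 2 with hf
  have hfnn : ∀ i, 0 ≤ f i := fun i => Finset.sum_nonneg fun j _ => sq_nonneg _
  set B : ℝ := ∑ i, ∑ j, (Xh (memh i) j - Uh i j) ^ 2 with hB
  set C : ℝ := ∑ i, ∑ j, (Uh i j - U i j) ^ 2 with hC
  have hBC : B ≤ C := by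
    calc B ≤ ∑ i, ∑ j, (X (mem i) j - Uh i j) ^ 2 := hmin mem X
      _ = C := by
        rw [hC]
        refine Finset.sum_congr rfl fun i _ => Finset.sum_congr rfl fun j _ => ?_
        rw [← hU i]; ring
  have hAC : (∑ i, f i) ≤ 4 * C := by
    have h1 : (∑ i, f i) ≤ ∑ i, (2 * ∑ j, (Xh (memh i) j - Uh i j) ^ 2
        + 2 * ∑ j, (Uh i j - U i j) ^ 2) := by
      refine Finset.sum_le_sum fun i _ => ?_
      calc f i ≤ ∑ j, (2 * (Xh (memh i) j - Uh i j) ^ 2 + 2 * (Uh i j - U i j) ^ 2) :=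
          Finset.sum_le_sum fun j _ => by
            nlinarith [sq_nonneg (Xh (memh i) j - Uh i j - (Uh i j - U i j))]
        _ = _ := by rw [Finset.sum_add_distrib, ← Finset.mul_sum, ← Finset.mul_sum]
    rw [Finset.sum_add_distrib, ← Finset.mul_sum, ← Finset.mul_sum, ← hB, ← hC] at h1
    linarith
  have key : ∀ k, (((Finset.univ.filter fun i =>
      mem i = k ∧ δ k / 2 ≤ enorm2 (fun j => Xh (memh i) j - U i j)).card : ℝ)) * δ k ^ 2
      ≤ 4 * ∑ i ∈ Finset.univ.filter (fun i => mem i = k), f i := by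
    intro k
    set S := Finset.univ.filter fun i =>
      mem i = k ∧ δ k / 2 ≤ enorm2 (fun j => Xh (memh i) j - U i j) with hS
    have hcard : ((S.card : ℝ)) * δ k ^ 2 = ∑ _i ∈ S, δ k ^ 2 := by
      rw [Finset.sum_const, nsmul_eq_mul]
    rw [hcard]
    have hstep : (∑ _i ∈ S, δ k ^ 2) ≤ ∑ i ∈ S, 4 * f i := by
      refine Finset.sum_le_sum fun i hi => ?_
      rw [hS, Finset.mem_filter] at hi
      have h2 : δ k / 2 ≤ Real.sqrt (f i) := hi.2.2
      have hs : Real.sqrt (f i) ^ 2 = f i := Real.sq_sqrt (hfnn i)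
      have hnn : 0 ≤ Real.sqrt (f i) := Real.sqrt_nonneg _
      nlinarith [hδpos k]
    refine hstep.trans ?_
    rw [Finset.mul_sum]
    refine Finset.sum_le_sum_of_subset_of_nonneg ?_ fun i _ _ => by
      have := hfnn i; positivity
    intro i hi
    rw [hS, Finset.mem_filter] at hi
    simp only [Finset.mem_filter]
    exact ⟨hi.1, hi.2.1⟩
  calc (∑ k, ((Finset.univ.filter fun i =>
        mem i = k ∧ δ k / 2 ≤ enorm2 (fun j => Xh (memh i) j - U i j)).card : ℝ) * δ k ^ 2)
      ≤ ∑ k, 4 * ∑ i ∈ Finset.univ.filter (fun i => mem i = k), f i :=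
        Finset.sum_le_sum fun k _ => key k
    _ = 4 * ∑ k, ∑ i ∈ Finset.univ.filter (fun i => mem i = k), f i := by
        rw [Finset.mul_sum]
    _ = 4 * ∑ i, f i := by
        congr 1
        exact Finset.sum_fiberwise _ _ _
    _ ≤ 4 * (4 * C) := by linarith
    _ = 16 * C := by ring
end
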